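/- A pair (d, m) ∈ ℤ × (Fin 7 → ℤ) is an exceptional class (d² − ∑ m_i² = −1 and 3d − ∑ m_i = 1) if and only if the multiset of values {m_1, …, m_7} together with d is one of: d = 0 with one entry −1 and six entries 0; d = 1 with two entries 1 and five entries 0; d = 2 with five entries 1 and two entries 0; d = 3 with one entry 2 and six entries 1. The numbers of exceptional classes of these four types are respectively 7, 21, 21 and 7, so E_7 has exactly 56 elements. -/

import Mathlib

/-!
Cauchy–Schwarz turns `∑ mᵢ = 3d - 1` and `∑ mᵢ² = d² + 1` into `(3d - 1)² ≤ 7(d² + 1)`, so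
`0 ≤ d ≤ 3`. For each such `d` there is an integer `a` (namely `-1, 0, 0, 1`) with
`∑ (mᵢ - a)(mᵢ - a - 1) = ∑ mᵢ² - (2a + 1) ∑ mᵢ + 7a(a + 1) = 0`; as every term is nonnegative,
all `mᵢ` lie in `{a, a + 1}`, and `∑ mᵢ` fixes how many equal `a + 1`. A class of a type with `k`
entries `b` and `7 - k` entries `a ≠ b` is determined by the `k`-subset of positions holding `b`,
which gives the counts `C(7,1), C(7,2), C(7,5), C(7,1) = 7, 21, 21, 7`, summing to `56`.
-/

/-- The multiset of values of `m : Fin 7 → ℤ`. -/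
def mset7 (m : Fin 7 → ℤ) : Multiset ℤ := Finset.univ.val.map m

/-- A class `(d, m)` in `Λ₇ = ℤ × (Fin 7 → ℤ)` is exceptional if
`d² - ∑ mᵢ² = -1` and `3d - ∑ mᵢ = 1`. -/
def IsExc7 (p : ℤ × (Fin 7 → ℤ)) : Prop :=
  p.1 ^ 2 - ∑ i, (p.2 i) ^ 2 = -1 ∧ 3 * p.1 - ∑ i, p.2 i = 1

/-- The four types `(d, multiset of mᵢ)` of exceptional classes on `S₇`. -/
def excTypes7 : List (ℤ × Multiset ℤ) :=
  [ (0, (-1) ::ₘ Multiset.replicate 6 0),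
    (1, Multiset.replicate 2 1 + Multiset.replicate 5 0),
    (2, Multiset.replicate 5 1 + Multiset.replicate 2 0),
    (3, 2 ::ₘ Multiset.replicate 6 1) ]

open Finset

namespace Multiset

variable {α : Type*} [DecidableEq α] {M : Multiset α} {a b : α}

theorem eq_replicate_count_add_replicate_count (hab : a ≠ b) (h : ∀ x ∈ M, x = a ∨ x = b) :
    M = replicate (M.count b) b + replicate (M.count a) a := by
  rw [← filter_eq', ← filter_eq']
  conv_lhs => rw [← filter_add_not (· = b) M]
  congr 1
  refine filter_congr fun x hx => ?_
  rcases h x hx with rfl | rfl <;> simp [hab, hab.symm]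

theorem eq_replicate_add_replicate_iff_count_eq {k n : ℕ} (hab : a ≠ b)
    (h : ∀ x ∈ M, x = a ∨ x = b) (hcard : card M = k + n) :
    M = replicate k b + replicate n a ↔ M.count b = k := by
  constructor
  · rintro rfl
    simp [count_replicate, hab]
  · intro hk
    have hM := eq_replicate_count_add_replicate_count hab h
    have hcount : M.count a = n := by
      rw [hM, card_add, card_replicate, card_replicate] at hcard
      omega
    rwa [hk, hcount] at hM

end Multiset

theorem Finset.count_map_univ_val {ι α : Type*} [Fintype ι] [DecidableEq α] (m : ι → α) (x : α) :
    (univ.val.map m).count x = #{i | m i = x} := by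
  rw [Multiset.count_map, ← filter_val, card_val]
  simp only [eq_comm]

theorem Int.sub_mul_sub_add_one_nonneg (x a : ℤ) : 0 ≤ (x - a) * (x - (a + 1)) := by
  rcases le_or_gt x a with h | h <;> nlinarith

section TwoValued

variable {ι : Type*} [Fintype ι]

theorem eq_or_eq_add_one_of_sum_eq_zero {m : ι → ℤ} {a : ℤ}
    (h : ∑ i, (m i - a) * (m i - (a + 1)) = 0) (i : ι) : m i = a ∨ m i = a + 1 := by
  have hi := (sum_eq_zero_iff_of_nonneg fun j _ => Int.sub_mul_sub_add_one_nonneg (m j) a).1 h i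
    (mem_univ i)
  rcases mul_eq_zero.1 hi with h | h
  · exact Or.inl (sub_eq_zero.1 h)
  · exact Or.inr (sub_eq_zero.1 h)

/-- The moment hypotheses make `∑ (mᵢ - a)(mᵢ - a - 1)` vanish, while each of its terms is `≥ 0`
because no integer lies strictly between `a` and `a + 1`. -/
theorem map_univ_val_eq_replicate_of_moments {m : ι → ℤ} {a : ℤ} {k n : ℕ}
    (hcard : Fintype.card ι = k + n) (hsum : ∑ i, m i = k * (a + 1) + n * a)
    (hsq : ∑ i, m i ^ 2 = k * (a + 1) ^ 2 + n * a ^ 2) :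
    univ.val.map m = Multiset.replicate k (a + 1) + Multiset.replicate n a := by
  have hzero : ∑ i, (m i - a) * (m i - (a + 1)) = 0 := by
    calc ∑ i, (m i - a) * (m i - (a + 1))
        = ∑ i, (m i ^ 2 - (2 * a + 1) * m i + a * (a + 1)) := by
          refine sum_congr rfl fun i _ => ?_
          ring
      _ = ∑ i, m i ^ 2 - (2 * a + 1) * ∑ i, m i + Fintype.card ι * (a * (a + 1)) := by
          rw [sum_add_distrib, sum_sub_distrib, ← mul_sum, sum_const, card_univ, nsmul_eq_mul]
      _ = 0 := by
          rw [hsq, hsum, hcard]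
          push_cast
          ring
  have hab : a ≠ a + 1 := by omega
  have hmem : ∀ x ∈ univ.val.map m, x = a ∨ x = a + 1 := by
    simpa using eq_or_eq_add_one_of_sum_eq_zero hzero
  have hcard' : Multiset.card (univ.val.map m) = k + n := by simpa using hcard
  rw [Multiset.eq_replicate_add_replicate_iff_count_eq hab hmem hcard']
  have hM := Multiset.eq_replicate_count_add_replicate_count hab hmem
  have hsum' := congrArg Multiset.sum hM
  have hcard'' := congrArg Multiset.card hM
  simp only [Multiset.sum_add, Multiset.sum_replicate, Multiset.card_add,
    Multiset.card_replicate, nsmul_eq_mul, Multiset.card_map, card_val, card_univ] at hsum' hcard''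
  change ∑ i, m i = _ at hsum'
  zify at hcard hcard'' ⊢
  linear_combination hsum - hsum' + a * hcard'' - a * hcard

theorem ncard_setOf_map_univ_val_eq_replicate {α : Type*} [DecidableEq ι] [DecidableEq α]
    {a b : α} (hab : a ≠ b) {k n : ℕ} (hcard : Fintype.card ι = k + n) :
    {m : ι → α | univ.val.map m = Multiset.replicate k b + Multiset.replicate n a}.ncard =
      (k + n).choose k := by
  set indicator : Finset ι → ι → α := fun s i => if i ∈ s then b else a
  have hinj : Function.Injective indicator := fun s t hst => by
    ext i
    have := congrFun hst i
    by_cases hs : i ∈ s <;> by_cases ht : i ∈ t <;> simp_all [indicator, hab.symm]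
  have hset : {m : ι → α | univ.val.map m = Multiset.replicate k b + Multiset.replicate n a} =
      indicator '' ↑(powersetCard k (univ : Finset ι)) := by
    ext m
    have hcard' : Multiset.card (univ.val.map m) = k + n := by simpa using hcard
    simp only [Set.mem_ofPred_eq, Set.mem_image, mem_coe, mem_powersetCard_univ]
    constructor
    · intro hm
      have hval : ∀ i, m i = a ∨ m i = b := fun i => by
        have hi : m i ∈ univ.val.map m := Multiset.mem_map_of_mem m (mem_univ i)
        rw [hm, Multiset.mem_add, Multiset.mem_replicate, Multiset.mem_replicate] at hi
        tauto
      refine ⟨({i | m i = b} : Finset ι), ?_, ?_⟩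
      · rw [← count_map_univ_val, hm]
        simp [Multiset.count_replicate, hab]
      · funext i
        rcases hval i with h | h <;> simp [indicator, h, hab]
    · rintro ⟨s, hs, rfl⟩
      have hval : ∀ x ∈ univ.val.map (indicator s), x = a ∨ x = b := by
        simp only [Multiset.mem_map, mem_val, mem_univ, true_and, forall_exists_index,
          forall_apply_eq_imp_iff, indicator]
        intro i
        split_ifs <;> simp
      rw [Multiset.eq_replicate_add_replicate_iff_count_eq hab hval hcard', count_map_univ_val, ← hs]
      congr 1
      ext i
      by_cases hi : i ∈ s <;> simp [indicator, hi, hab]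
  rw [hset, Set.ncard_image_of_injective _ hinj, Set.ncard_coe_finset, card_powersetCard, card_univ,
    hcard]

end TwoValued

theorem Set.ncard_setOf_fst_eq_and {α β : Type*} (x : α) (P : β → Prop) :
    {p : α × β | p.1 = x ∧ P p.2}.ncard = {y | P y}.ncard := by
  have hprod : {p : α × β | p.1 = x ∧ P p.2} = {x} ×ˢ {y | P y} := by
    ext
    simp
  rw [hprod, Set.ncard_prod, Set.ncard_singleton, one_mul]

theorem Set.ncard_preimage_setOf_mem_list {α β : Type*} (f : α → β) {L : List β}
    (hL : L.Nodup) (hfin : ∀ t ∈ L, (f ⁻¹' {t}).Finite) :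
    (f ⁻¹' {t | t ∈ L}).ncard = (L.map fun t => (f ⁻¹' {t}).ncard).sum := by
  induction L with
  | nil => simp
  | cons t L ih =>
    rw [List.nodup_cons] at hL
    have hfinL : ∀ s ∈ L, (f ⁻¹' {s}).Finite := fun s hs => hfin s (List.mem_cons_of_mem t hs)
    have hsplit : f ⁻¹' {s | s ∈ t :: L} = f ⁻¹' {t} ∪ f ⁻¹' {s | s ∈ L} := by
      ext
      simp
    have hdisj : Disjoint (f ⁻¹' {t}) (f ⁻¹' {s | s ∈ L}) :=
      Disjoint.preimage f (Set.disjoint_singleton_left.2 hL.1)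
    rw [hsplit, Set.ncard_union_eq hdisj (hfin t List.mem_cons_self)
      (L.finite_toSet.preimage' hfinL), ih hL.2 hfinL, List.map_cons, List.sum_cons]

section ExceptionalS7

variable {d : ℤ} {m : Fin 7 → ℤ}

theorem isExc7_iff_mset7 :
    IsExc7 (d, m) ↔ d ^ 2 - ((mset7 m).map (· ^ 2)).sum = -1 ∧ 3 * d - (mset7 m).sum = 1 := by
  simp [IsExc7, mset7, Finset.sum]

theorem isExc7_of_mem_excTypes7 (h : (d, mset7 m) ∈ excTypes7) : IsExc7 (d, m) := by
  simp only [excTypes7, List.mem_cons, List.not_mem_nil, or_false, Prod.mk.injEq] at h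
  rw [isExc7_iff_mset7]
  rcases h with ⟨rfl, hM⟩ | ⟨rfl, hM⟩ | ⟨rfl, hM⟩ | ⟨rfl, hM⟩ <;> rw [hM] <;> decide

theorem nonneg_and_le_three_of_isExc7 (h : IsExc7 (d, m)) : 0 ≤ d ∧ d ≤ 3 := by
  obtain ⟨hsq, hsum⟩ := h
  have hcs : (∑ i, m i) ^ 2 ≤ 7 * ∑ i, m i ^ 2 := by
    simpa using sq_sum_le_card_mul_sum_sq (s := univ) (f := m)
  constructor <;> nlinarith

theorem mem_excTypes7_of_isExc7 (h : IsExc7 (d, m)) : (d, mset7 m) ∈ excTypes7 := by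
  obtain ⟨hd0, hd3⟩ := nonneg_and_le_three_of_isExc7 h
  obtain ⟨hsq, hsum⟩ := h
  dsimp only at hsq hsum
  interval_cases d
  · rw [mset7, map_univ_val_eq_replicate_of_moments (a := -1) (k := 6) (n := 1) rfl
      (by push_cast; linarith) (by push_cast; linarith)]
    decide
  · rw [mset7, map_univ_val_eq_replicate_of_moments (a := 0) (k := 2) (n := 5) rfl
      (by push_cast; linarith) (by push_cast; linarith)]
    decide
  · rw [mset7, map_univ_val_eq_replicate_of_moments (a := 0) (k := 5) (n := 2) rfl
      (by push_cast; linarith) (by push_cast; linarith)]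
    decide
  · rw [mset7, map_univ_val_eq_replicate_of_moments (a := 1) (k := 1) (n := 6) rfl
      (by push_cast; linarith) (by push_cast; linarith)]
    decide

theorem ncard_setOf_fst_eq_and_mset7_eq_replicate (x : ℤ) {a b : ℤ} (hab : a ≠ b) {k n : ℕ}
    (hkn : k + n = 7) :
    {p : ℤ × (Fin 7 → ℤ) | p.1 = x ∧
      mset7 p.2 = Multiset.replicate k b + Multiset.replicate n a}.ncard = (k + n).choose k := by
  rw [Set.ncard_setOf_fst_eq_and x (mset7 · = _)]
  exact ncard_setOf_map_univ_val_eq_replicate hab (by simp [hkn])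

theorem isExc7_iff_mem_excTypes7 : IsExc7 (d, m) ↔ (d, mset7 m) ∈ excTypes7 :=
  ⟨mem_excTypes7_of_isExc7, isExc7_of_mem_excTypes7⟩

theorem map_ncard_excTypes7 :
    excTypes7.map (fun t => {p : ℤ × (Fin 7 → ℤ) | p.1 = t.1 ∧ mset7 p.2 = t.2}.ncard) =
      [7, 21, 21, 7] := by
  simp only [excTypes7, List.map_cons, List.map_nil, ← Multiset.singleton_add,
    ← Multiset.replicate_one]
  rw [ncard_setOf_fst_eq_and_mset7_eq_replicate 0 (a := 0) (b := -1) (by norm_num) rfl,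
    ncard_setOf_fst_eq_and_mset7_eq_replicate 1 (a := 0) (b := 1) (by norm_num) rfl,
    ncard_setOf_fst_eq_and_mset7_eq_replicate 2 (a := 0) (b := 1) (by norm_num) rfl,
    ncard_setOf_fst_eq_and_mset7_eq_replicate 3 (a := 1) (b := 2) (by norm_num) rfl]
  rfl

theorem ncard_setOf_isExc7 : {p : ℤ × (Fin 7 → ℤ) | IsExc7 p}.ncard = 56 := by
  let type : ℤ × (Fin 7 → ℤ) → ℤ × Multiset ℤ := fun p => (p.1, mset7 p.2)
  have hfiber (t : ℤ × Multiset ℤ) : type ⁻¹' {t} = {p | p.1 = t.1 ∧ mset7 p.2 = t.2} := by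
    ext p
    simp [type, Prod.ext_iff]
  have hfin : ∀ t ∈ excTypes7, (type ⁻¹' {t}).Finite := fun t ht => by
    have hmem := List.mem_map_of_mem
      (f := fun t => {p : ℤ × (Fin 7 → ℤ) | p.1 = t.1 ∧ mset7 p.2 = t.2}.ncard) ht
    rw [map_ncard_excTypes7] at hmem
    refine Set.finite_of_ncard_ne_zero ?_
    rw [hfiber]
    simp only [List.mem_cons, List.not_mem_nil, or_false] at hmem
    omega
  have hexc : {p | IsExc7 p} = type ⁻¹' {t | t ∈ excTypes7} := by
    ext ⟨d, m⟩
    exact isExc7_iff_mem_excTypes7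
  rw [hexc, Set.ncard_preimage_setOf_mem_list type (by decide) hfin]
  simp only [hfiber, map_ncard_excTypes7]
  rfl

end ExceptionalS7

/-- `(d, m) ∈ ℤ × (Fin 7 → ℤ)` is exceptional iff `d` together
with the multiset `{m₁, …, m₇}` is one of the four types listed in
`excTypes7`; the numbers of exceptional classes of those types are
respectively `7, 21, 21, 7`, so `E₇` has exactly `56` elements. -/
theorem exceptional_classes_S7 :
    (∀ d : ℤ, ∀ m : Fin 7 → ℤ,
      IsExc7 (d, m) ↔ (d, mset7 m) ∈ excTypes7) ∧
    (List.map
      (fun t => {p : ℤ × (Fin 7 → ℤ) | p.1 = t.1 ∧ mset7 p.2 = t.2}.ncard)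
      excTypes7 = [7, 21, 21, 7]) ∧
    {p : ℤ × (Fin 7 → ℤ) | IsExc7 p}.ncard = 56 :=
  ⟨fun _ _ => isExc7_iff_mem_excTypes7, map_ncard_excTypes7, ncard_setOf_isExc7⟩
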